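/- Let f : ℝ_+^J → ℝ be convex, let 0 < d_i < ρ < u_i for i = 1,…,J, let Π = ×_{i=1}^J [d_i,u_i] with vertices ξ_I = (d_i for i∈I, u_j for j∉I), I ⊂ {1,…,J}, and suppose the vertices are in general position in the sense that for any J subsets I₁,…,I_J the vectors ξ_{I_k} − ρ𝟙 (k = 1,…,J) are linearly independent in ℝ^J. Then for every z ∈ ℝ_+^J with positive coordinates, the reduced Bellman operator (𝓑f)(z) = min_{γ∈ℝ^J} max_{ξ^j∈[d_j,u_j]} [f(ξ∘z) − ⟨γ, ξ∘z − ρz⟩] satisfies (𝓑f)(z) = max_Ω 𝔼_Ω f(ξ∘z), where Ω ranges over all subsets of J+1 vertices of Π whose convex hull contains ρ𝟙 in its interior, and 𝔼_Ω denotes expectation with respect to the unique probability law supported on Ω that is risk-neutral with respect to ρ𝟙, i.e. Σ_{ξ_I∈Ω} p_I ξ_I = ρ𝟙. -/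

import Mathlib

noncomputable section

/-- The reduced Bellman operator
`(𝓑f)(z) = min_γ max_{ξ ∈ Π[d_j,u_j]} [f(ξ∘z) − ⟨γ, ξ∘z − ρz⟩]`. -/
def Bop (J : ℕ) (ρ : ℝ) (dd uu : Fin J → ℝ) (f : (Fin J → ℝ) → ℝ) :
    (Fin J → ℝ) → ℝ :=
  fun z => ⨅ γ : Fin J → ℝ,
    ⨆ ξ : { ξ : Fin J → ℝ // ∀ j, ξ j ∈ Set.Icc (dd j) (uu j) },
      (f (fun j => ξ.1 j * z j) - ∑ j, γ j * (ξ.1 j * z j - ρ * z j))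

/-- The vertex of the parallelepiped `Π = ×_i [d_i, u_i]` determined by the subset `I`:
coordinate `d_j` for `j ∈ I` and `u_j` for `j ∉ I`. -/
def vtx (J : ℕ) (dd uu : Fin J → ℝ) (I : Finset (Fin J)) : Fin J → ℝ :=
  fun j => if j ∈ I then dd j else uu j

/-!
For fixed `γ` the integrand is convex in `ξ`, so the inner maximum over the box is attained at a
vertex, and `𝓑f(z)` becomes the finite linear programme `min_γ max_I (a_I - ⟪γ, w_I⟫)` with
`a_I = f(ξ_I ∘ z)` and `w_I = ξ_I ∘ z - ρz`. Its dual (obtained by Hahn–Banach separation in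
`ℝ^J × ℝ`) is the maximum of `∑ p_I a_I` over the risk-neutral laws `p`. A maximiser ties with every
risk-neutral law supported inside its support, so Carathéodory lets us take its support affinely
independent, hence of at most `J + 1` points; general position forces at least `J + 1`. Those
points then form an affine basis in which `ρ𝟙` has positive barycentric coordinates, i.e. lies in
the interior of their convex hull.
-/

open Set Function Filter Topology

section ConvexHull

variable {ι E : Type*} [Fintype ι] [AddCommGroup E] [Module ℝ E]

lemma convexHull_range_eq_image_stdSimplex (v : ι → E) :
    convexHull ℝ (range v) = (fun p : ι → ℝ => ∑ i, p i • v i) '' stdSimplex ℝ ι := by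
  classical
  rw [← convexHull_basis_eq_stdSimplex, show (fun p : ι → ℝ => ∑ i, p i • v i) =
    Fintype.linearCombination ℝ v from funext fun p => (Fintype.linearCombination_apply ℝ v p).symm,
    LinearMap.image_convexHull, ← range_comp]
  congr with i
  simp [Fintype.linearCombination_apply]

lemma Function.Injective.sum_extend_zero_smul {κ R M : Type*} [Fintype κ] [Semiring R]
    [AddCommMonoid M] [Module R M] {σ : κ → ι} (hσ : Injective σ) (w : κ → R) (g : ι → M) :
    ∑ i, extend σ w (0 : ι → R) i • g i = ∑ k, w k • g (σ k) := by
  classical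
  rw [← Finset.sum_subset (Finset.subset_univ (Finset.univ.image σ)) fun i _ hi => by
    rw [extend_apply' w (0 : ι → R) i (by simpa using hi), Pi.zero_apply, zero_smul],
    Finset.sum_image fun k _ k' _ h => hσ h]
  simp [hσ.extend_apply]

/-- Carathéodory's theorem, in terms of weights. -/
lemma exists_affineIndependent_of_mem_stdSimplex (v : ι → E) {p : ι → ℝ}
    (hp : p ∈ stdSimplex ℝ ι) :
    ∃ q ∈ stdSimplex ℝ ι, ∑ i, q i • v i = ∑ i, p i • v i ∧ (∀ i, q i ≠ 0 → p i ≠ 0) ∧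
      AffineIndependent ℝ (fun i : Finset.univ.filter (q · ≠ 0) => v i) := by
  have hx : ∑ i, p i • v i ∈ convexHull ℝ (v '' {i | p i ≠ 0}) := by
    have h1 : ∑ i ∈ Finset.univ.filter (p · ≠ 0), p i = 1 := by
      rw [Finset.sum_filter_ne_zero, hp.2]
    rw [← Finset.sum_filter_of_ne (p := (p · ≠ 0)) fun i _ h => left_ne_zero_of_smul h,
      ← Finset.centerMass_eq_of_sum_1 _ _ h1]
    exact Finset.centerMass_mem_convexHull _ (fun i _ => hp.1 i) (by rw [h1]; exact one_pos)
      fun i hi => mem_image_of_mem v (by simpa using hi)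
  obtain ⟨κ, _, y, w, hys, hy, hw0, hw1, hwy⟩ := eq_pos_convex_span_of_mem_convexHull hx
  choose σ hσp hσy using fun k => hys (mem_range_self k)
  have hσ : Injective σ := fun k k' h => hy.injective (by rw [← hσy k, ← hσy k', h])
  set q := extend σ w (0 : ι → ℝ)
  have hq_apply : ∀ k, q (σ k) = w k := hσ.extend_apply w (0 : ι → ℝ)
  have hq_zero : ∀ i, i ∉ range σ → q i = 0 := fun i hi => extend_apply' w (0 : ι → ℝ) i hi
  have hq_ne : ∀ i, q i ≠ 0 ↔ i ∈ range σ := fun i =>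
    ⟨not_imp_comm.1 (hq_zero i), by rintro ⟨k, rfl⟩; rw [hq_apply]; exact (hw0 k).ne'⟩
  refine ⟨q, ⟨fun i => ?_, ?_⟩, ?_, ?_, ?_⟩
  · by_cases hi : i ∈ range σ
    · obtain ⟨k, rfl⟩ := hi
      exact hq_apply k ▸ (hw0 k).le
    · exact (hq_zero i hi).ge
  · simpa [hw1] using hσ.sum_extend_zero_smul w (fun _ => (1 : ℝ))
  · rw [hσ.sum_extend_zero_smul, ← hwy]
    simp only [hσy]
  · intro i hi
    obtain ⟨k, rfl⟩ := (hq_ne i).1 hi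
    exact hσp k
  · let e : κ ≃ Finset.univ.filter (q · ≠ 0) :=
      (Equiv.ofInjective σ hσ).trans (Equiv.subtypeEquivRight fun i => by simp [hq_ne])
    have he : (fun i : Finset.univ.filter (q · ≠ 0) => v i) ∘ e = y := funext hσy
    rw [← affineIndependent_equiv e, he]
    exact hy

lemma ConvexOn.ciSup_eq_ciSup_of_convexHull_range_eq [Nonempty ι] {v : ι → E} {P : E → Prop}
    (hv : convexHull ℝ (range v) = {x | P x}) {g : E → ℝ} (hg : ConvexOn ℝ {x | P x} g) :
    ⨆ x : {x // P x}, g x = ⨆ i, g (v i) := by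
  have hg' : ConvexOn ℝ (convexHull ℝ (range v)) g := by rwa [hv]
  have hle : ∀ x : {x // P x}, g x ≤ ⨆ i, g (v i) := fun x => by
    obtain ⟨_, ⟨i, rfl⟩, hi⟩ :=
      hg'.exists_ge_of_mem_convexHull (subset_convexHull ℝ _) (by rw [hv]; exact x.2)
    exact hi.trans (le_ciSup (f := fun i => g (v i)) (Finite.bddAbove_range _) i)
  have hmem : ∀ i, P (v i) := fun i => by
    have := subset_convexHull ℝ (range v) (mem_range_self i)
    rwa [hv] at this
  have : Nonempty {x // P x} := ⟨⟨_, hmem (Classical.arbitrary ι)⟩⟩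
  exact le_antisymm (ciSup_le hle) (ciSup_le fun i =>
    le_ciSup (f := fun x : {x // P x} => g x) ⟨_, forall_mem_range.2 hle⟩ ⟨v i, hmem i⟩)

end ConvexHull

lemma AffineIndependent.sum_smul_mem_interior_convexHull {κ E : Type*} [Fintype κ]
    [NormedAddCommGroup E] [NormedSpace ℝ E] [FiniteDimensional ℝ E] {v : κ → E}
    (hv : AffineIndependent ℝ v) (hcard : Fintype.card κ = Module.finrank ℝ E + 1)
    {q : κ → ℝ} (hq : ∀ k, 0 < q k) (hq1 : ∑ k, q k = 1) :
    ∑ k, q k • v k ∈ interior (convexHull ℝ (range v)) := by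
  let b : AffineBasis κ ℝ E := ⟨v, hv, hv.affineSpan_eq_top_iff_card_eq_finrank_add_one.2 hcard⟩
  change _ ∈ interior (convexHull ℝ (range b))
  rw [b.interior_convexHull]
  intro k
  have := b.coord_apply_combination_of_mem (Finset.mem_univ k) hq1
  rw [Finset.affineCombination_eq_linear_combination _ _ _ hq1] at this
  exact this ▸ hq k

section GeneralPosition

variable {α M : Type*} [Fintype α] [AddCommGroup M] [Module ℝ M]

lemma sum_subtype_support_smul (q : α → ℝ) (g : α → M) :
    ∑ i : Finset.univ.filter (q · ≠ 0), q i • g i = ∑ i, q i • g i := by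
  rw [Finset.sum_coe_sort _ (fun i => q i • g i)]
  exact Finset.sum_filter_of_ne fun i _ h => left_ne_zero_of_smul h

lemma linearIndependent_restrict_of_card_le {n : ℕ} {v : α → M} (hn : n ≤ Fintype.card α)
    (hv : ∀ Is : Fin n → α, Injective Is → LinearIndependent ℝ (fun m => v (Is m)))
    {s : Finset α} (hs : s.card ≤ n) : LinearIndependent ℝ (fun i : s => v i) := by
  obtain ⟨t, hst, ht⟩ := Finset.exists_superset_card_eq hs hn
  let e := t.equivFinOfCardEq ht
  have ht_li : LinearIndependent ℝ (fun i : t => v i) :=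
    (linearIndependent_equiv e.symm).1 (hv _ (Subtype.val_injective.comp e.symm.injective))
  exact ht_li.comp (fun i : s => ⟨i, hst i.2⟩) fun i j h => Subtype.ext (congrArg Subtype.val h :)

lemma lt_card_support_of_sum_smul_eq {n : ℕ} (v : α → M) (x : M) (hn : n ≤ Fintype.card α)
    (hv : ∀ Is : Fin n → α, Injective Is → LinearIndependent ℝ (fun m => v (Is m) - x))
    {q : α → ℝ} (hq : ∑ i, q i = 1) (hqx : ∑ i, q i • v i = x) :
    n < (Finset.univ.filter (q · ≠ 0)).card := by
  by_contra! h
  have hli := linearIndependent_restrict_of_card_le (v := fun i => v i - x) hn hv h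
  have hsum : ∑ i : Finset.univ.filter (q · ≠ 0), q i • (v i - x) = 0 :=
    (sum_subtype_support_smul q fun i => v i - x).trans <| by
      simp [smul_sub, Finset.sum_sub_distrib, ← Finset.sum_smul, hq, hqx]
  have hq0 : ∀ i, q i = 0 := fun i => by
    by_contra hi
    exact hi (Fintype.linearIndependent_iff.1 hli _ hsum ⟨i, by simpa using hi⟩)
  simp [hq0] at hq

lemma card_support_eq_and_mem_interior_convexHull {E : Type*} [NormedAddCommGroup E]
    [NormedSpace ℝ E] [FiniteDimensional ℝ E] {n : ℕ} {v : α → E} {x : E}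
    (hE : Module.finrank ℝ E = n) (hn : n ≤ Fintype.card α)
    (hv : ∀ Is : Fin n → α, Injective Is → LinearIndependent ℝ (fun m => v (Is m) - x))
    {q : α → ℝ} (hq : q ∈ stdSimplex ℝ α) (hqx : ∑ i, q i • v i = x)
    (hAI : AffineIndependent ℝ (fun i : Finset.univ.filter (q · ≠ 0) => v i)) :
    (Finset.univ.filter (q · ≠ 0)).card = n + 1 ∧
      x ∈ interior (convexHull ℝ (v '' Finset.univ.filter (q · ≠ 0))) := by
  have hcard : (Finset.univ.filter (q · ≠ 0)).card = n + 1 := by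
    refine le_antisymm ?_ (lt_card_support_of_sum_smul_eq v x hn hv hq.2 hqx)
    have := hAI.card_le_finrank_succ
    rw [Fintype.card_coe] at this
    exact this.trans (hE ▸ Nat.succ_le_succ (Submodule.finrank_le _))
  refine ⟨hcard, ?_⟩
  have := hAI.sum_smul_mem_interior_convexHull (by rw [Fintype.card_coe, hcard, hE])
    (q := fun i => q i) (fun i => (hq.1 i).lt_of_ne' (Finset.mem_filter.1 i.2).2)
    (by simpa using (sum_subtype_support_smul q fun _ => (1 : ℝ)).trans (by simpa using hq.2))
  rw [sum_subtype_support_smul, hqx] at this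
  rwa [image_eq_range]

end GeneralPosition

section Duality

variable {ι n : Type*} [Fintype ι]

def riskNeutralLaws (w : ι → n → ℝ) : Set (ι → ℝ) :=
  {p | p ∈ stdSimplex ℝ ι ∧ ∑ i, p i • w i = 0}

lemma isCompact_riskNeutralLaws (w : ι → n → ℝ) : IsCompact (riskNeutralLaws w) :=
  (isCompact_stdSimplex ℝ ι).inter_right (isClosed_eq (by fun_prop) continuous_const)

lemma exists_pos_add_smul_sub_mem_riskNeutralLaws {w : ι → n → ℝ} {p q : ι → ℝ}
    (hp : p ∈ riskNeutralLaws w) (hq : q ∈ riskNeutralLaws w) (hqp : ∀ i, q i ≠ 0 → p i ≠ 0) :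
    ∃ t : ℝ, 0 < t ∧ p + t • (p - q) ∈ riskNeutralLaws w := by
  have hev : ∀ᶠ t in 𝓝[>] (0 : ℝ), ∀ i, 0 ≤ p i + t * (p i - q i) := by
    refine eventually_all.2 fun i => ?_
    by_cases hpi : p i = 0
    · simp [hpi, not_imp_not.1 (hqp i) hpi]
    · have hlim : Tendsto (fun t : ℝ => p i + t * (p i - q i)) (𝓝[>] 0) (𝓝 (p i)) := by
        refine tendsto_nhdsWithin_of_tendsto_nhds ?_
        exact (by fun_prop : Continuous fun t : ℝ => p i + t * (p i - q i)).tendsto' 0 _ (by simp)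
      exact (hlim.eventually (lt_mem_nhds ((hp.1.1 i).lt_of_ne' hpi))).mono fun t ht => ht.le
  obtain ⟨t, ht, ht0⟩ := (hev.and self_mem_nhdsWithin).exists
  refine ⟨t, ht0, ⟨ht, ?_⟩, ?_⟩
  · simp [Finset.sum_add_distrib, Finset.sum_sub_distrib, ← Finset.mul_sum, hp.1.2, hq.1.2]
  · simp [add_smul, sub_smul, mul_smul, Finset.sum_add_distrib, Finset.sum_sub_distrib,
      ← Finset.smul_sum, hp.2, hq.2]

lemma IsMaxOn.dotProduct_eq_of_support_subset {w : ι → n → ℝ} {a p q : ι → ℝ}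
    (hmax : IsMaxOn (· ⬝ᵥ a) (riskNeutralLaws w) p) (hp : p ∈ riskNeutralLaws w)
    (hq : q ∈ riskNeutralLaws w) (hqp : ∀ i, q i ≠ 0 → p i ≠ 0) : q ⬝ᵥ a = p ⬝ᵥ a := by
  obtain ⟨t, ht, hpq⟩ := exists_pos_add_smul_sub_mem_riskNeutralLaws hp hq hqp
  have hext : (p + t • (p - q)) ⬝ᵥ a = p ⬝ᵥ a + t * (p ⬝ᵥ a - q ⬝ᵥ a) := by
    simp only [add_dotProduct, smul_dotProduct, sub_dotProduct, smul_eq_mul]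
  have h1 : q ⬝ᵥ a ≤ p ⬝ᵥ a := hmax hq
  have h2 : (p + t • (p - q)) ⬝ᵥ a ≤ p ⬝ᵥ a := hmax hpq
  nlinarith

lemma dotProduct_le_ciSup_sub_dotProduct [Fintype n] {w : ι → n → ℝ} {p : ι → ℝ}
    (hp : p ∈ riskNeutralLaws w) (a : ι → ℝ) (γ : n → ℝ) :
    p ⬝ᵥ a ≤ ⨆ i, (a i - γ ⬝ᵥ w i) := by
  have hγ : ∑ i, p i * γ ⬝ᵥ w i = 0 := by
    simp [← smul_eq_mul, ← dotProduct_smul, ← dotProduct_sum, hp.2]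
  calc p ⬝ᵥ a = ∑ i, p i * (a i - γ ⬝ᵥ w i) := by
        simp only [mul_sub, Finset.sum_sub_distrib, hγ, sub_zero]
        rfl
    _ ≤ ∑ i, p i * ⨆ i, (a i - γ ⬝ᵥ w i) := Finset.sum_le_sum fun i _ =>
        mul_le_mul_of_nonneg_left
          (le_ciSup (f := fun i => a i - γ ⬝ᵥ w i) (Finite.bddAbove_range _) i) (hp.1.1 i)
    _ = ⨆ i, (a i - γ ⬝ᵥ w i) := by rw [← Finset.sum_mul, hp.1.2, one_mul]

lemma ContinuousLinearMap.exists_apply_prod_eq_dotProduct_add [Fintype n]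
    (l : (n → ℝ) × ℝ →L[ℝ] ℝ) : ∃ β : n → ℝ, ∀ x t, l (x, t) = β ⬝ᵥ x + t * l (0, 1) := by
  classical
  refine ⟨fun j => l (fun k => if j = k then 1 else 0, 0), fun x t => ?_⟩
  have hx := LinearMap.pi_apply_eq_sum_univ (l.toLinearMap ∘ₗ LinearMap.inl ℝ (n → ℝ) ℝ) x
  simp only [LinearMap.comp_apply, LinearMap.inl_apply, ContinuousLinearMap.coe_coe] at hx
  rw [show ((x, t) : (n → ℝ) × ℝ) = (x, 0) + t • (0, 1) by simp, map_add, map_smul, hx]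
  simp [dotProduct, mul_comm]

/-- Separate `(0, M')` from the convex hull of the points `(w i, a i)`; the separating functional,
normalised by its last coordinate, yields `γ`. -/
lemma exists_forall_sub_dotProduct_lt [Fintype n] {w : ι → n → ℝ} {a : ι → ℝ} {M M' : ℝ}
    (hM : IsGreatest ((· ⬝ᵥ a) '' riskNeutralLaws w) M) (hMM' : M < M') :
    ∃ γ : n → ℝ, ∀ i, a i - γ ⬝ᵥ w i < M' := by
  set g : ι → (n → ℝ) × ℝ := fun i => (w i, a i)
  have hK : convexHull ℝ (range g) = (fun p => ∑ i, p i • g i) '' stdSimplex ℝ ι :=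
    convexHull_range_eq_image_stdSimplex g
  have hg : ∀ p : ι → ℝ, ∑ i, p i • g i = (∑ i, p i • w i, p ⬝ᵥ a) := fun p => by
    ext <;> simp [g, Prod.fst_sum, Prod.snd_sum, dotProduct]
  have hKc : IsCompact (convexHull ℝ (range g)) :=
    hK ▸ (isCompact_stdSimplex ℝ ι).image (by fun_prop)
  have hout : ((0 : n → ℝ), M') ∉ convexHull ℝ (range g) := by
    rw [hK]
    rintro ⟨p, hp, hpM'⟩
    simp only [hg, Prod.mk.injEq] at hpM'
    exact (hM.2 ⟨p, ⟨hp, hpM'.1⟩, hpM'.2⟩).not_gt hMM'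
  obtain ⟨l, u, hlK, hlu⟩ :=
    geometric_hahn_banach_closed_point (convex_convexHull ℝ _) hKc.isClosed hout
  obtain ⟨p, hp, hpM⟩ := hM.1
  have hin : ((0 : n → ℝ), M) ∈ convexHull ℝ (range g) :=
    hK ▸ ⟨p, hp.1, by simp only [hg, hp.2]; rw [← hpM]⟩
  obtain ⟨β, hl⟩ := l.exists_apply_prod_eq_dotProduct_add
  set c := l (0, 1)
  have hc : 0 < c := by
    have h := (hlK _ hin).trans hlu
    rw [hl, hl] at h
    nlinarith
  refine ⟨-(c⁻¹ • β), fun i => ?_⟩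
  have h := (hlK _ (subset_convexHull ℝ _ (mem_range_self i))).trans hlu
  change l (w i, a i) < l (0, M') at h
  rw [hl, hl, dotProduct_zero, zero_add] at h
  rw [neg_dotProduct, smul_dotProduct, smul_eq_mul, sub_neg_eq_add, ← mul_lt_mul_iff_right₀ hc,
    mul_add, mul_inv_cancel_left₀ hc.ne']
  linarith

theorem ciInf_ciSup_sub_dotProduct_eq [Fintype n] {w : ι → n → ℝ} {a : ι → ℝ} {M : ℝ}
    (hM : IsGreatest ((· ⬝ᵥ a) '' riskNeutralLaws w) M) :
    ⨅ γ : n → ℝ, ⨆ i, (a i - γ ⬝ᵥ w i) = M := by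
  obtain ⟨p, hp, rfl⟩ := hM.1
  have hweak := dotProduct_le_ciSup_sub_dotProduct hp a
  have : Nonempty ι := by
    by_contra! h
    simpa using hp.1.2
  refine le_antisymm (le_of_forall_gt fun M' hM' => ?_) (le_ciInf hweak)
  obtain ⟨γ, hγ⟩ := exists_forall_sub_dotProduct_lt hM hM'
  obtain ⟨i, hi⟩ := exists_eq_ciSup_of_finite (f := fun i => a i - γ ⬝ᵥ w i)
  exact (ciInf_le ⟨_, forall_mem_range.2 hweak⟩ γ).trans_lt (hi ▸ hγ i)

end Duality

lemma ConvexOn.comp_mul_sub_dotProduct {n : Type*} [Fintype n] {f : (n → ℝ) → ℝ}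
    (hf : ConvexOn ℝ {x | ∀ i, 0 ≤ x i} f) {s : Set (n → ℝ)} (hs : Convex ℝ s)
    (hs0 : ∀ ξ ∈ s, ∀ j, 0 ≤ ξ j) {z : n → ℝ} (hz : ∀ j, 0 ≤ z j) (ρ : ℝ) (γ : n → ℝ) :
    ConvexOn ℝ s fun ξ => f (fun j => ξ j * z j) - γ ⬝ᵥ fun j => ξ j * z j - ρ * z j := by
  have hfz : ConvexOn ℝ s fun ξ => f (fun j => ξ j * z j) :=
    (hf.comp_linearMap (LinearMap.mulRight ℝ z)).subset
      (fun ξ hξ j => mul_nonneg (hs0 ξ hξ j) (hz j)) hs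
  have hgain : ConcaveOn ℝ s fun ξ => γ ⬝ᵥ fun j => ξ j * z j - ρ * z j := by
    refine ⟨hs, fun x _ y _ a b _ _ hab => le_of_eq ?_⟩
    simp only [dotProduct, smul_eq_mul, Pi.add_apply, Pi.smul_apply, Finset.mul_sum,
      ← Finset.sum_add_distrib]
    exact Finset.sum_congr rfl fun j _ => by linear_combination (-(γ j * ρ * z j)) * hab
  exact hfz.sub hgain

lemma sum_smul_mul_sub_eq_zero_iff {ι n : Type*} [Fintype ι] {v : ι → n → ℝ} {z : n → ℝ}
    (hz : ∀ j, z j ≠ 0) (ρ : ℝ) {p : ι → ℝ} (hp : ∑ i, p i = 1) :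
    ∑ i, p i • (fun j => v i j * z j - ρ * z j) = 0 ↔ ∑ i, p i • v i = ρ • 1 := by
  simp only [funext_iff, Finset.sum_apply, Pi.smul_apply, smul_eq_mul, Pi.zero_apply,
    Pi.one_apply, mul_one]
  refine forall_congr' fun j => ?_
  have hsum : ∑ i, p i * (v i j * z j - ρ * z j) =
      (∑ i, p i * v i j) * z j - (∑ i, p i) * (ρ * z j) := by
    rw [Finset.sum_mul, Finset.sum_mul, ← Finset.sum_sub_distrib]
    exact Finset.sum_congr rfl fun i _ => by ring
  rw [hp, one_mul, ← sub_mul] at hsum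
  rw [hsum, mul_eq_zero, sub_eq_zero, or_iff_left (hz j)]

section Vertices

variable {J : ℕ} {dd uu : Fin J → ℝ}

lemma range_vtx : range (vtx J dd uu) = univ.pi fun j => {dd j, uu j} := by
  ext ξ
  simp only [mem_range, Set.mem_pi, mem_univ, true_implies, mem_insert_iff, mem_singleton_iff]
  constructor
  · rintro ⟨I, rfl⟩ j
    unfold vtx
    split_ifs <;> simp
  · intro h
    refine ⟨Finset.univ.filter fun j => ξ j = dd j, funext fun j => ?_⟩
    unfold vtx
    split_ifs with hj
    · exact ((Finset.mem_filter.1 hj).2).symm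
    · exact ((h j).resolve_left (by simpa using hj)).symm

lemma convexHull_range_vtx (h : ∀ j, dd j ≤ uu j) :
    convexHull ℝ (range (vtx J dd uu)) = {ξ | ∀ j, ξ j ∈ Icc (dd j) (uu j)} := by
  rw [range_vtx, convexHull_pi]
  ext ξ
  simp [convexHull_pair, segment_eq_Icc (h _), Pi.le_def, forall_and]

lemma bop_eq_ciInf_ciSup_vtx {ρ : ℝ} {z : Fin J → ℝ} {f : (Fin J → ℝ) → ℝ}
    (hd : ∀ j, 0 ≤ dd j) (hdu : ∀ j, dd j ≤ uu j) (hz : ∀ j, 0 ≤ z j)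
    (hf : ConvexOn ℝ {x | ∀ i, 0 ≤ x i} f) :
    Bop J ρ dd uu f z = ⨅ γ : Fin J → ℝ, ⨆ I, (f (fun j => vtx J dd uu I j * z j) -
      γ ⬝ᵥ fun j => vtx J dd uu I j * z j - ρ * z j) := by
  refine iInf_congr fun γ => ConvexOn.ciSup_eq_ciSup_of_convexHull_range_eq
    (convexHull_range_vtx hdu) (hf.comp_mul_sub_dotProduct ?_ ?_ hz ρ γ)
  · exact convexHull_range_vtx hdu ▸ convex_convexHull ℝ _
  · exact fun ξ hξ j => (hd j).trans (hξ j).1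

end Vertices

theorem stmt15 (J : ℕ) (ρ : ℝ) (dd uu : Fin J → ℝ)
    (hd : ∀ i, 0 < dd i) (hdρ : ∀ i, dd i < ρ) (hρu : ∀ i, ρ < uu i)
    (f : (Fin J → ℝ) → ℝ)
    (hconv : ConvexOn ℝ { z : Fin J → ℝ | ∀ i, 0 ≤ z i } f)
    -- the vertices are in general position: for any J pairwise distinct subsets
    -- I₁,…,I_J the vectors ξ_{I_k} − ρ𝟙 are linearly independent
    (hgen : ∀ Is : Fin J → Finset (Fin J), Function.Injective Is →
      LinearIndependent ℝ (fun m => vtx J dd uu (Is m) - ρ • (1 : Fin J → ℝ)))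
    (z : Fin J → ℝ) (hz : ∀ j, 0 < z j) :
    IsGreatest { y : ℝ | ∃ Ω : Finset (Finset (Fin J)), Ω.card = J + 1 ∧
        (ρ • (1 : Fin J → ℝ)) ∈ interior (convexHull ℝ (vtx J dd uu '' Ω)) ∧
        ∃ p : Finset (Fin J) → ℝ, (∀ I, 0 ≤ p I) ∧ (∀ I ∉ Ω, p I = 0) ∧
          (∑ I : Finset (Fin J), p I) = 1 ∧
          -- risk-neutrality with respect to ρ𝟙
          (∑ I : Finset (Fin J), p I • vtx J dd uu I) = ρ • (1 : Fin J → ℝ) ∧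
          y = ∑ I : Finset (Fin J), p I * f (fun j => vtx J dd uu I j * z j) }
      (Bop J ρ dd uu f z) := by
  have hdu : ∀ j, dd j ≤ uu j := fun j => ((hdρ j).trans (hρu j)).le
  set a : Finset (Fin J) → ℝ := fun I => f (fun j => vtx J dd uu I j * z j)
  set w : Finset (Fin J) → Fin J → ℝ := fun I j => vtx J dd uu I j * z j - ρ * z j
  have hlaw : ∀ p ∈ stdSimplex ℝ (Finset (Fin J)),
      p ∈ riskNeutralLaws w ↔ ∑ I, p I • vtx J dd uu I = ρ • 1 := fun p hp =>
    (and_iff_right hp).trans (sum_smul_mul_sub_eq_zero_iff (fun j => (hz j).ne') ρ hp.2)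
  obtain ⟨p₀, hp₀, hp₀ρ⟩ : ρ • (1 : Fin J → ℝ) ∈
      (fun p => ∑ I, p I • vtx J dd uu I) '' stdSimplex ℝ (Finset (Fin J)) := by
    rw [← convexHull_range_eq_image_stdSimplex, convexHull_range_vtx hdu]
    exact fun j => by simpa using ⟨(hdρ j).le, (hρu j).le⟩
  obtain ⟨p, hp, hpmax⟩ := (isCompact_riskNeutralLaws w).exists_isMaxOn
    ⟨p₀, (hlaw p₀ hp₀).2 hp₀ρ⟩ (by fun_prop : Continuous (· ⬝ᵥ a)).continuousOn
  have hBop : Bop J ρ dd uu f z = p ⬝ᵥ a :=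
    (bop_eq_ciInf_ciSup_vtx (fun j => (hd j).le) hdu (fun j => (hz j).le) hconv).trans
      (ciInf_ciSup_sub_dotProduct_eq ⟨mem_image_of_mem _ hp, forall_mem_image.2 hpmax⟩)
  obtain ⟨q, hq, hqρ, hqp, hqAI⟩ := exists_affineIndependent_of_mem_stdSimplex (vtx J dd uu) hp.1
  rw [(hlaw p hp.1).1 hp] at hqρ
  obtain ⟨hcard, hinterior⟩ := card_support_eq_and_mem_interior_convexHull
    (Module.finrank_fin_fun ℝ) (by simpa using Nat.lt_two_pow_self.le) hgen hq hqρ hqAI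
  refine ⟨⟨_, hcard, hinterior, q, hq.1, fun I hI => by simpa using hI, hq.2, hqρ, ?_⟩, ?_⟩
  · rw [hBop]
    exact (hpmax.dotProduct_eq_of_support_subset hp ((hlaw q hq).2 hqρ) hqp).symm
  · rintro y ⟨-, -, -, r, hr0, -, hr1, hrρ, rfl⟩
    rw [hBop]
    exact hpmax ((hlaw r ⟨hr0, hr1⟩).2 hrρ)
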